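/- Let (Y_i)_{i=1}^n be an i.i.d. sample from a distribution with mean m, variance v > 0, finite fourth moment, and kurtosis E[(Y − m)⁴]/v² not greater than κ. Then for any ε ∈ (0, 1/2), the empirical mean M = (1/n) Σ_{i=1}^n Y_i satisfies, with probability at least 1 − 2ε: |M − m| ≤ ((3(n−1) + κ)/(2 n ε))^{1/4} √(v/n). -/

import Mathlib

/-!
Write `S = ∑ᵢ (Yᵢ - m)`. Expanding `(A + B)⁴` for independent centred `A`, `B`, all terms
of odd degree in `A` or in `B` have zero expectation, and induction over the sample gives
`𝔼 S⁴ = n μ₄ + 3 n (n - 1) v²` with `μ₄ = 𝔼 (Y - m)⁴ ≤ κ v²`. Markov's inequality for `S⁴`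
at level `(n t)⁴` then bounds `P (|M - m| > t)`, and the threshold `t` of the statement is
exactly the one that makes this bound equal to `2 ε`.
-/

open MeasureTheory ProbabilityTheory Finset

lemma MeasureTheory.MemLp.integrable_pow_of_le {α : Type*} [MeasurableSpace α] {μ : Measure α}
    [IsFiniteMeasure μ] {f : α → ℝ} {n k : ℕ} (hf : MemLp f n μ) (hk : k ≤ n) :
    Integrable (fun x => f x ^ k) μ :=
  (integrable_norm_pow_of_le hf.1 hk hf.integrable_norm_pow').mono' (hf.1.pow k)
    (ae_of_all _ fun x => by simp [norm_pow])

lemma MeasureTheory.Integrable.memLp_of_even_pow {α : Type*} [MeasurableSpace α] {μ : Measure α}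
    {f : α → ℝ} {p : ℕ} (hp : Even p) (hp₀ : p ≠ 0) (hf : AEStronglyMeasurable f μ)
    (h : Integrable (fun x => f x ^ p) μ) : MemLp f p μ :=
  (integrable_norm_rpow_iff hf (by exact_mod_cast hp₀) (by simp)).1
    (by simpa [Real.norm_eq_abs, hp.pow_abs] using h)

lemma Real.rpow_one_div_four_mul_sqrt_pow_four {c w : ℝ} (hc : 0 ≤ c) (hw : 0 ≤ w) :
    (c ^ ((1 : ℝ) / 4) * √w) ^ 4 = c * w ^ 2 := by
  rw [mul_pow, ← Real.rpow_natCast (c ^ _), ← Real.rpow_mul hc,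
    show (4 : ℕ) = 2 * 2 from rfl, pow_mul, Real.sq_sqrt hw]
  norm_num

section Moments

variable {Ω : Type*} [MeasurableSpace Ω] {P : Measure Ω}

lemma MeasureTheory.MemLp.of_map_eq {Y : Ω → ℝ} {μ : Measure ℝ} [NeZero μ] {p : ENNReal}
    (hμ : MemLp (fun y => y) p μ) (hY : P.map Y = μ) : MemLp Y p P := by
  have hYae : AEMeasurable Y P := .of_map_ne_zero (hY ▸ NeZero.ne μ)
  exact (memLp_map_measure_iff (by fun_prop) hYae).1 (hY ▸ hμ)

lemma ProbabilityTheory.IndepFun.integral_add_pow [IsFiniteMeasure P] {A B : Ω → ℝ}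
    (hAB : IndepFun A B P) {n : ℕ} (hA : MemLp A n P) (hB : MemLp B n P) :
    ∫ ω, (A ω + B ω) ^ n ∂P =
      ∑ k ∈ range (n + 1), (∫ ω, A ω ^ k ∂P) * (∫ ω, B ω ^ (n - k) ∂P) * n.choose k := by
  simp_rw [add_pow]
  rw [integral_finsetSum]
  · refine sum_congr rfl fun k _ => ?_
    rw [integral_mul_const, hAB.integral_fun_comp_mul_comp (f := (· ^ k)) (g := (· ^ (n - k)))
      hA.aemeasurable hB.aemeasurable (by fun_prop) (by fun_prop)]
  · intro k hk
    have hk : k ≤ n := Nat.lt_succ_iff.mp (mem_range.mp hk)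
    exact ((hAB.comp (measurable_id.pow_const k) (measurable_id.pow_const (n - k))).integrable_mul
      (hA.integrable_pow_of_le hk) (hB.integrable_pow_of_le (n.sub_le k))).mul_const _

variable [IsProbabilityMeasure P]

lemma sq_integral_le_integral_sq {f : Ω → ℝ} (hf : MemLp f 2 P) :
    (∫ ω, f ω ∂P) ^ 2 ≤ ∫ ω, f ω ^ 2 ∂P := by
  have := variance_eq_sub hf ▸ variance_nonneg f P
  simpa using this

lemma sq_integral_sq_le_integral_pow_four {f : Ω → ℝ} (hf : MemLp f 4 P) :
    (∫ ω, f ω ^ 2 ∂P) ^ 2 ≤ ∫ ω, f ω ^ 4 ∂P := by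
  have hsq : MemLp (fun ω => f ω ^ 2) 2 P :=
    (memLp_two_iff_integrable_sq (hf.1.pow 2)).2 (by
      simpa [← pow_mul] using hf.integrable_pow_of_le (k := 4) (by norm_num))
  simpa [← pow_mul] using sq_integral_le_integral_sq hsq

lemma ofReal_one_sub_le_measure_abs_le_of_integral_pow_le {S : Ω → ℝ} {p : ℕ} {t δ : ℝ}
    (hS : Integrable (fun ω => |S ω| ^ p) P) (ht : 0 < t)
    (h : ∫ ω, |S ω| ^ p ∂P ≤ δ * t ^ p) :
    ENNReal.ofReal (1 - δ) ≤ P {ω | |S ω| ≤ t} := by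
  have htp : 0 < t ^ p := pow_pos ht p
  have hmarkov : P.real {ω | t ^ p ≤ |S ω| ^ p} ≤ δ := by
    have := mul_meas_ge_le_integral_of_nonneg (ae_of_all _ fun ω => by positivity) hS (t ^ p)
    exact le_of_mul_le_mul_left (by linarith) htp
  have htail : P {ω | |S ω| ≤ t}ᶜ ≤ ENNReal.ofReal δ :=
    calc P {ω | |S ω| ≤ t}ᶜ ≤ P {ω | t ^ p ≤ |S ω| ^ p} :=
          measure_mono fun ω (hω : ¬|S ω| ≤ t) => pow_le_pow_left₀ ht.le (not_le.mp hω).le p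
      _ = ENNReal.ofReal (P.real {ω | t ^ p ≤ |S ω| ^ p}) := (ofReal_measureReal).symm
      _ ≤ ENNReal.ofReal δ := ENNReal.ofReal_le_ofReal hmarkov
  rw [ENNReal.ofReal_sub _ (measureReal_nonneg.trans hmarkov), ENNReal.ofReal_one,
    tsub_le_iff_right]
  calc 1 = P Set.univ := measure_univ.symm
    _ ≤ _ := measure_univ_le_add_compl _
    _ ≤ _ := by gcongr

lemma ProbabilityTheory.IndepFun.integral_add_pow_four_of_integral_eq_zero {A B : Ω → ℝ}
    (hAB : IndepFun A B P) (hA : MemLp A 4 P) (hB : MemLp B 4 P)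
    (hA₀ : ∫ ω, A ω ∂P = 0) (hB₀ : ∫ ω, B ω ∂P = 0) :
    ∫ ω, (A ω + B ω) ^ 4 ∂P =
      ∫ ω, A ω ^ 4 ∂P + 6 * (∫ ω, A ω ^ 2 ∂P) * (∫ ω, B ω ^ 2 ∂P) + ∫ ω, B ω ^ 4 ∂P := by
  rw [hAB.integral_add_pow (n := 4) (by exact_mod_cast hA) (by exact_mod_cast hB)]
  simp [sum_range_succ, hA₀, hB₀, Nat.choose]
  ring

section Sums

variable {ι : Type*} {X : ι → Ω → ℝ}

lemma ProbabilityTheory.iIndepFun.integral_sum_sq_of_integral_eq_zero (hX : iIndepFun X P)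
    (hL2 : ∀ i, MemLp (X i) 2 P) (h₀ : ∀ i, ∫ ω, X i ω ∂P = 0) (s : Finset ι) :
    ∫ ω, (∑ i ∈ s, X i ω) ^ 2 ∂P = ∑ i ∈ s, ∫ ω, X i ω ^ 2 ∂P := by
  have hsum₀ : ∫ ω, (∑ i ∈ s, X i) ω ∂P = 0 := by
    simp [integral_finsetSum _ fun i _ => (hL2 i).integrable one_le_two, h₀]
  calc ∫ ω, (∑ i ∈ s, X i ω) ^ 2 ∂P = Var[∑ i ∈ s, X i; P] := by
        rw [variance_of_integral_eq_zero (memLp_finsetSum' s fun i _ => hL2 i).aemeasurable hsum₀]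
        simp
    _ = ∑ i ∈ s, Var[X i; P] :=
        IndepFun.variance_sum (fun i _ => hL2 i) fun i _ j _ hij => hX.indepFun hij
    _ = ∑ i ∈ s, ∫ ω, X i ω ^ 2 ∂P :=
        sum_congr rfl fun i _ => variance_of_integral_eq_zero (hL2 i).aemeasurable (h₀ i)

lemma ProbabilityTheory.iIndepFun.integral_sum_pow_four_of_integral_eq_zero (hX : iIndepFun X P)
    (hL4 : ∀ i, MemLp (X i) 4 P) (h₀ : ∀ i, ∫ ω, X i ω ∂P = 0) (s : Finset ι) :
    ∫ ω, (∑ i ∈ s, X i ω) ^ 4 ∂P = ∑ i ∈ s, ∫ ω, X i ω ^ 4 ∂P +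
      3 * ((∑ i ∈ s, ∫ ω, X i ω ^ 2 ∂P) ^ 2 - ∑ i ∈ s, (∫ ω, X i ω ^ 2 ∂P) ^ 2) := by
  classical
  have hL2 i : MemLp (X i) 2 P := (hL4 i).mono_exponent (by norm_num)
  induction s using Finset.induction_on with
  | empty => simp
  | @insert i s hi ih =>
    have hindep : IndepFun (X i) (fun ω => ∑ j ∈ s, X j ω) P := by
      simpa [Finset.sum_fn] using
        (hX.indepFun_finsetSum_of_notMem₀ (fun j => (hL4 j).aemeasurable) hi).symm
    have hsum₀ : ∫ ω, ∑ j ∈ s, X j ω ∂P = 0 := by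
      rw [integral_finsetSum _ fun j _ => (hL4 j).integrable (by norm_num)]
      simp [h₀]
    simp_rw [sum_insert hi]
    rw [hindep.integral_add_pow_four_of_integral_eq_zero (hL4 i)
      (memLp_finsetSum s fun j _ => hL4 j) (h₀ i) hsum₀, ih,
      hX.integral_sum_sq_of_integral_eq_zero hL2 h₀]
    ring

end Sums

lemma ProbabilityTheory.iIndepFun.integral_sum_sub_pow_four_of_map_eq {ι : Type*} [Fintype ι]
    {Y : ι → Ω → ℝ} {μ : Measure ℝ} (hY : iIndepFun Y P) (hL4 : ∀ i, MemLp (Y i) 4 P)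
    (hid : ∀ i, P.map (Y i) = μ) {m : ℝ} (hm : ∫ y, y ∂μ = m) :
    ∫ ω, (∑ i, (Y i ω - m)) ^ 4 ∂P = Fintype.card ι * ∫ y, (y - m) ^ 4 ∂μ +
      3 * Fintype.card ι * (Fintype.card ι - 1) * (∫ y, (y - m) ^ 2 ∂μ) ^ 2 := by
  have hmap i {g : ℝ → ℝ} (hg : Continuous g) : ∫ ω, g (Y i ω) ∂P = ∫ y, g y ∂μ := by
    rw [← hid i, integral_map (hL4 i).aemeasurable hg.aestronglyMeasurable]
  have h₀ i : ∫ ω, Y i ω - m ∂P = 0 := by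
    rw [integral_sub ((hL4 i).integrable (by norm_num)) (integrable_const m),
      hmap i (g := fun y => y) continuous_id, hm]
    simp
  have hX : iIndepFun (fun i ω => Y i ω - m) P := hY.comp _ fun _ => measurable_sub_const m
  rw [hX.integral_sum_pow_four_of_integral_eq_zero (fun i => (hL4 i).sub (memLp_const m)) h₀]
  have hmap₂ i : ∫ ω, (Y i ω - m) ^ 2 ∂P = ∫ y, (y - m) ^ 2 ∂μ :=
    hmap i (g := fun y => (y - m) ^ 2) (by fun_prop)
  have hmap₄ i : ∫ ω, (Y i ω - m) ^ 4 ∂P = ∫ y, (y - m) ^ 4 ∂μ :=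
    hmap i (g := fun y => (y - m) ^ 4) (by fun_prop)
  simp only [hmap₂, hmap₄, sum_const, card_univ, nsmul_eq_mul]
  ring

end Moments

lemma abs_mean_sub_le_iff {n : ℕ} (hn : 0 < n) (y : Fin n → ℝ) (m t : ℝ) :
    |(1 / n) * (∑ i, y i) - m| ≤ t ↔ |∑ i, (y i - m)| ≤ n * t := by
  have hn₀ : (0 : ℝ) < n := by exact_mod_cast hn
  have hmean : (1 / n) * (∑ i, y i) - m = (∑ i, (y i - m)) / n := by
    rw [sum_sub_distrib, sum_const, card_univ, Fintype.card_fin, nsmul_eq_mul]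
    field_simp
  rw [hmean, abs_div, Nat.abs_cast, div_le_iff₀' hn₀]

theorem empirical_mean_fourth_moment_chebyshev
    {Ω : Type*} [MeasurableSpace Ω] (P : Measure Ω) [IsProbabilityMeasure P]
    (n : ℕ) (hn : 0 < n) (Y : Fin n → Ω → ℝ)
    (μ : Measure ℝ) [IsProbabilityMeasure μ]
    (hindep : iIndepFun Y P)
    (hid : ∀ i, Measure.map (Y i) P = μ)
    (hL4 : Integrable (fun y => y ^ 4) μ)
    (m v : ℝ) (hm : m = ∫ y, y ∂μ) (hv : v = ∫ y, (y - m) ^ 2 ∂μ) (hvpos : 0 < v)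
    (κ : ℝ) (hκ : (∫ y, (y - m) ^ 4 ∂μ) / v ^ 2 ≤ κ)
    (ε : ℝ) (hε : ε ∈ Set.Ioo (0 : ℝ) (1 / 2)) :
    ENNReal.ofReal (1 - 2 * ε) ≤
      P {ω | |(1 / n) * (∑ i, Y i ω) - m| ≤
        ((3 * ((n : ℝ) - 1) + κ) / (2 * n * ε)) ^ ((1 : ℝ) / 4) * Real.sqrt (v / n)} := by
  obtain ⟨hε₀, -⟩ := hε
  have hn₀ : (0 : ℝ) < n := by exact_mod_cast hn
  have hμL4 : MemLp (fun y : ℝ => y) 4 μ :=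
    hL4.memLp_of_even_pow (p := 4) (by decide) (by norm_num) aestronglyMeasurable_id
  have hYL4 i : MemLp (Y i) 4 P := hμL4.of_map_eq (hid i)
  have hμ₄κ : ∫ y, (y - m) ^ 4 ∂μ ≤ κ * v ^ 2 := (div_le_iff₀ (by positivity)).1 hκ
  have hκ₁ : 1 ≤ κ := le_trans ((one_le_div (by positivity)).2
    (hv ▸ sq_integral_sq_le_integral_pow_four (hμL4.sub (memLp_const m)))) hκ
  set c := (3 * ((n : ℝ) - 1) + κ) / (2 * n * ε)
  have hc : 0 < c := by
    have : (1 : ℝ) ≤ n := by exact_mod_cast hn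
    exact div_pos (by linarith) (by positivity)
  set t := c ^ ((1 : ℝ) / 4) * √(v / n)
  have ht : 0 < t := by positivity
  have hS : MemLp (fun ω => ∑ i, (Y i ω - m)) 4 P :=
    memLp_finsetSum _ fun i _ => (hYL4 i).sub (memLp_const m)
  simp only [abs_mean_sub_le_iff hn]
  refine ofReal_one_sub_le_measure_abs_le_of_integral_pow_le (p := 4)
    (by simpa using hS.integrable_norm_pow') (mul_pos hn₀ ht) ?_
  simp only [Even.pow_abs (by decide : Even 4)]
  rw [hindep.integral_sum_sub_pow_four_of_map_eq hYL4 hid hm.symm, Fintype.card_fin, ← hv,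
    mul_pow, Real.rpow_one_div_four_mul_sqrt_pow_four hc.le (by positivity)]
  have hbudget : 2 * ε * (n ^ 4 * (c * (v / n) ^ 2)) = n * (3 * (n - 1) + κ) * v ^ 2 := by
    simp only [c]; field_simp
  rw [hbudget]
  linarith [mul_le_mul_of_nonneg_left hμ₄κ hn₀.le]
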